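/- arXiv:1111.3342 — 2 statements merged into one kernel-verified Lean document; each statement's English description precedes it below -/
import Mathlib

section
/- Let $\Gamma = \langle y_1, y_2 \rangle \cong \mathbb{Z}^2$, and for parameters $(k_0, q_1, q_2)$ and $(k_0', q_1', q_2')$ with $k_0, k_0' \in \mathbb{Z}^+$ and $q_1, q_1'$ not roots of unity, $0 < |q_1|, |q_1'| < 1$ (over $k = \mathbb{C}$), consider data with $g_1 = g_2 = y_1^{k_0}$, $\chi_1(y_1) = q_1$, $\chi_1(y_2) = q_2$, $\chi_2 = \chi_1^{-1}$ (and primed analogues). If there is an automorphism $\varphi$ of $\Gamma$ and a permutation $\sigma \in S_2$ with $\varphi(g_i) = g'_{\sigma(i)}$ and $\chi_i = \chi'_{\sigma(i)} \circ \varphi$, then $k_0 = k_0'$, $q_1 = q_1'$, and there exists an integer $b$ such that $q_2' = q_1^b q_2$ or $q_2' = q_1^b q_2^{-1}$. -/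
/-!
Write `e` for `φ` read as an additive automorphism of `ℤ × ℤ`. From `e (k₀, 0) = (k₀', 0)`,
`e (1, 0) = (a, 0)` with `k₀ a = k₀'`; since `e` is onto, its triangular matrix has unit
diagonal entries, so `a = 1` (it is positive), `k₀ = k₀'`, and `e (0, 1) = (b, ±1)`.
Comparing characters at `y₁` gives `q₁ = q₁'` if `σ = 1`, and `q₁ = q₁'⁻¹` if `σ = (0 1)`, which
`|q₁|, |q₁'| < 1` rule out; comparing at `y₂` gives `q₂ = q₁ ^ b * q₂' ^ (±1)`.
-/

namespace AddEquiv

variable (e : ℤ × ℤ ≃+ ℤ × ℤ)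

lemma apply_int_prod (m n : ℤ) : e (m, n) = m • e (1, 0) + n • e (0, 1) := by
  rw [← map_zsmul, ← map_zsmul, ← map_add]
  congr 1; simp

lemma isUnit_of_apply_one_zero_int_prod {a : ℤ} (he : e (1, 0) = (a, 0)) :
    IsUnit a ∧ IsUnit (e (0, 1)).2 := by
  obtain ⟨⟨b, d⟩, hbd⟩ : ∃ p, e (0, 1) = p := ⟨_, rfl⟩
  have hpre (p : ℤ × ℤ) : ((e.symm p).1 * a + (e.symm p).2 * b, (e.symm p).2 * d) = p := by
    conv_rhs => rw [← e.apply_symm_apply p, apply_int_prod, he, hbd]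
    simp
  obtain ⟨hsa, htd⟩ := Prod.ext_iff.mp (hpre (1, 0))
  obtain ⟨-, hnd⟩ := Prod.ext_iff.mp (hpre (0, 1))
  have hd : IsUnit d := .of_mul_eq_one_right _ hnd
  have ht : (e.symm (1, 0)).2 = 0 := by simpa [hd.ne_zero] using htd
  rw [ht, zero_mul, add_zero] at hsa
  exact ⟨.of_mul_eq_one_right _ hsa, by rwa [hbd]⟩

lemma apply_one_zero_int_prod_of_apply {k k' : ℤ} (hk : 0 < k) (hk' : 0 < k')
    (h : e (k, 0) = (k', 0)) : e (1, 0) = (1, 0) ∧ k = k' := by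
  obtain ⟨⟨a, c⟩, hac⟩ : ∃ p, e (1, 0) = p := ⟨_, rfl⟩
  rw [apply_int_prod, hac] at h
  obtain ⟨hka, hkc⟩ : k * a = k' ∧ k * c = 0 := by simpa using h
  obtain rfl : c = 0 := by simpa [hk.ne'] using hkc
  obtain rfl : a = 1 := by
    rcases Int.isUnit_iff.mp (isUnit_of_apply_one_zero_int_prod e hac).1 with rfl | rfl <;> omega
  exact ⟨hac, by simpa using hka⟩

end AddEquiv

lemma Units.ne_inv_of_norm_lt_one {𝕜 : Type*} [NormedDivisionRing 𝕜] {u v : 𝕜ˣ}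
    (hu : ‖(u : 𝕜)‖ < 1) (hv : ‖(v : 𝕜)‖ < 1) : u ≠ v⁻¹ := by
  rintro rfl
  have : ‖(v⁻¹ : 𝕜ˣ).val‖ * ‖(v : 𝕜)‖ = 1 := by rw [← norm_mul]; simp
  nlinarith [norm_nonneg (v : 𝕜)]

lemma exists_zpow_mul_eq_or {G : Type*} [CommGroup G] {x y y' : G} {b d : ℤ}
    (hd : d = 1 ∨ d = -1) (h : y = x ^ b * y' ^ d) :
    ∃ b' : ℤ, y' = x ^ b' * y ∨ y' = x ^ b' * y⁻¹ := by
  rcases hd with rfl | rfl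
  · exact ⟨-b, .inl (by rw [h]; group)⟩
  · exact ⟨b, .inr (by rw [h]; simp)⟩

lemma Multiplicative.ofAdd_int_prod (m n : ℤ) :
    ofAdd ((m, n) : ℤ × ℤ) = ofAdd ((1, 0) : ℤ × ℤ) ^ m * ofAdd ((0, 1) : ℤ × ℤ) ^ n := by
  rw [← ofAdd_zsmul, ← ofAdd_zsmul, ← ofAdd_add]
  congr 1; simp

theorem stmt_16_general (k₀ k₀' : ℤ) (hk₀ : 0 < k₀) (hk₀' : 0 < k₀')
    (q₁ q₂ q₁' q₂' : ℂˣ)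
    (habs : 0 < ‖(q₁ : ℂ)‖ ∧ ‖(q₁ : ℂ)‖ < 1)
    (habs' : 0 < ‖(q₁' : ℂ)‖ ∧ ‖(q₁' : ℂ)‖ < 1)
    (y₁ y₂ : Multiplicative (ℤ × ℤ))
    (hy₁ : y₁ = Multiplicative.ofAdd ((1, 0) : ℤ × ℤ))
    (hy₂ : y₂ = Multiplicative.ofAdd ((0, 1) : ℤ × ℤ))
    (g g' : Fin 2 → Multiplicative (ℤ × ℤ))
    (hg : ∀ i, g i = y₁ ^ k₀) (hg' : ∀ i, g' i = y₁ ^ k₀')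
    (χ χ' : Fin 2 → (Multiplicative (ℤ × ℤ) →* ℂˣ))
    (hχ₁ : χ 0 y₁ = q₁) (hχ₂ : χ 0 y₂ = q₂)
    (hχ₁' : χ' 0 y₁ = q₁') (hχ₂' : χ' 0 y₂ = q₂') (hχinv' : χ' 1 = (χ' 0)⁻¹)
    (φ : Multiplicative (ℤ × ℤ) ≃* Multiplicative (ℤ × ℤ))
    (σ : Equiv.Perm (Fin 2))
    (hφg : ∀ i, φ (g i) = g' (σ i))
    (hφχ : ∀ i, χ i = (χ' (σ i)).comp φ.toMonoidHom) :
    k₀ = k₀' ∧ q₁ = q₁' ∧ ∃ b : ℤ, q₂' = q₁ ^ b * q₂ ∨ q₂' = q₁ ^ b * q₂⁻¹ := by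
  subst hy₁ hy₂
  set e : ℤ × ℤ ≃+ ℤ × ℤ := AddEquiv.toMultiplicative.symm φ
  have he : e (k₀, 0) = (k₀', 0) := by
    have h := hφg 0
    rw [hg, hg', ← ofAdd_zsmul, ← ofAdd_zsmul] at h
    have h' : e (k₀ • (1, 0)) = k₀' • (1, 0) := congrArg Multiplicative.toAdd h
    simpa only [Prod.smul_mk, smul_eq_mul, mul_one, mul_zero] using h'
  obtain ⟨he₁, rfl⟩ := e.apply_one_zero_int_prod_of_apply hk₀ hk₀' he
  have hd := Int.isUnit_iff.mp (e.isUnit_of_apply_one_zero_int_prod he₁).2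
  have hφ₁ : φ (.ofAdd (1, 0)) = .ofAdd (1, 0) := congrArg Multiplicative.ofAdd he₁
  have hφ₂ : φ (.ofAdd (0, 1)) =
      .ofAdd (1, 0) ^ (e (0, 1)).1 * .ofAdd (0, 1) ^ (e (0, 1)).2 :=
    Multiplicative.ofAdd_int_prod _ _
  obtain hσ | hσ : σ 0 = 0 ∨ σ 0 = 1 := by omega
  · have hq₁ : q₁ = q₁' := by
      rw [← hχ₁, ← hχ₁', hφχ 0, hσ]; simp [hφ₁]
    have hq₂ : q₂ = q₁ ^ (e (0, 1)).1 * q₂' ^ (e (0, 1)).2 := by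
      rw [← hχ₂, hφχ 0, hσ]; simp [hφ₂, hχ₁', hχ₂', hq₁]
    exact ⟨rfl, hq₁, exists_zpow_mul_eq_or hd hq₂⟩
  · have hq₁ : q₁ = q₁'⁻¹ := by
      rw [← hχ₁, ← hχ₁', hφχ 0, hσ, hχinv']; simp [hφ₁]
    exact absurd hq₁ (Units.ne_inv_of_norm_lt_one habs.2 habs'.2)

/-- Isomorphism classification in Case 2(I) of Proposition 5.6: for data over
`Γ = ⟨y₁, y₂⟩ ≅ ℤ²` with `g₁ = g₂ = y₁^{k₀}`, `χ₁(y₁) = q₁`, `χ₁(y₂) = q₂`,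
`χ₂ = χ₁⁻¹` (and primed analogues), with `q₁, q₁'` not roots of unity and
`0 < |q₁|, |q₁'| < 1`, any isomorphism of data `(φ, σ)` forces `k₀ = k₀'`, `q₁ = q₁'`
and `q₂' = q₁^b q₂` or `q₂' = q₁^b q₂⁻¹` for some integer `b`. -/
theorem stmt_16 (k₀ k₀' : ℤ) (hk₀ : 0 < k₀) (hk₀' : 0 < k₀')
    (q₁ q₂ q₁' q₂' : ℂˣ)
    (hru : ∀ n : ℕ, 0 < n → q₁ ^ n ≠ 1) (hru' : ∀ n : ℕ, 0 < n → q₁' ^ n ≠ 1)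
    (habs : 0 < ‖(q₁ : ℂ)‖ ∧ ‖(q₁ : ℂ)‖ < 1)
    (habs' : 0 < ‖(q₁' : ℂ)‖ ∧ ‖(q₁' : ℂ)‖ < 1)
    (y₁ y₂ : Multiplicative (ℤ × ℤ))
    (hy₁ : y₁ = Multiplicative.ofAdd ((1, 0) : ℤ × ℤ))
    (hy₂ : y₂ = Multiplicative.ofAdd ((0, 1) : ℤ × ℤ))
    (g g' : Fin 2 → Multiplicative (ℤ × ℤ))
    (hg : ∀ i, g i = y₁ ^ k₀) (hg' : ∀ i, g' i = y₁ ^ k₀')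
    (χ χ' : Fin 2 → (Multiplicative (ℤ × ℤ) →* ℂˣ))
    (hχ₁ : χ 0 y₁ = q₁) (hχ₂ : χ 0 y₂ = q₂) (hχinv : χ 1 = (χ 0)⁻¹)
    (hχ₁' : χ' 0 y₁ = q₁') (hχ₂' : χ' 0 y₂ = q₂') (hχinv' : χ' 1 = (χ' 0)⁻¹)
    (φ : Multiplicative (ℤ × ℤ) ≃* Multiplicative (ℤ × ℤ))
    (σ : Equiv.Perm (Fin 2))
    (hφg : ∀ i, φ (g i) = g' (σ i))
    (hφχ : ∀ i, χ i = (χ' (σ i)).comp φ.toMonoidHom) :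
    k₀ = k₀' ∧ q₁ = q₁' ∧ ∃ b : ℤ, q₂' = q₁ ^ b * q₂ ∨ q₂' = q₁ ^ b * q₂⁻¹ :=
  stmt_16_general k₀ k₀' hk₀ hk₀' q₁ q₂ q₁' q₂' habs habs' y₁ y₂ hy₁ hy₂ g g' hg hg' χ χ' hχ₁ hχ₂
    hχ₁' hχ₂' hχinv' φ σ hφg hφχ
end

section
/- Let $\Gamma$ be a free abelian group of rank 2 with basis $y_1, y_2$, and suppose $\varphi$ is an automorphism of $\Gamma$ and there are positive integers $k_0, l_1, l_2, k_0'$ with $0 < l_1 < l_2$, $\gcd$-decomposition $l_1 = \bar{l}_1 l$, $l_2 = \bar{l}_2 l$ with $l > 0$, $\gcd(\bar{l}_1, \bar{l}_2) = 1$, such that $\varphi(y_1^{k_0}) = y_1'^{l_1} y_2'^{l_2}$ and $\varphi(y_1^{l_1} y_2^{l_2}) = y_1'^{k_0'}$ where $y_1' , y_2'$ is a basis of the target. Writing $\varphi(y_1) = y_1'^a y_2'^c$, $\varphi(y_2) = y_1'^b y_2'^d$ with $ad - bc = 1$, we get a contradiction: $k_0' = -l < 0$. -/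
/-!
An additive endomorphism of `ℤ²` with matrix `(a b; c d)` multiplies the cross product
`u × v = u₁ v₂ - u₂ v₁` by `ad - bc`. Applied to `u = (k₀, 0)` and `v = (l₁, l₂)`, whose images
are `(l₁, l₂)` and `(k₀', 0)`, determinant one gives `-k₀' l₂ = k₀ l₂`. As `l₂ > 0`, this forces
`k₀ = -k₀'`, which is impossible for positive `k₀, k₀'`.
-/

def cross {R : Type*} [CommRing R] (u v : R × R) : R := u.1 * v.2 - u.2 * v.1

theorem map_int_prod_eq {F : Type*} [FunLike F (ℤ × ℤ) (ℤ × ℤ)]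
    [AddMonoidHomClass F (ℤ × ℤ) (ℤ × ℤ)] (f : F) {a b c d : ℤ}
    (h₁ : f (1, 0) = (a, c)) (h₂ : f (0, 1) = (b, d)) (u : ℤ × ℤ) :
    f u = (a * u.1 + b * u.2, c * u.1 + d * u.2) := by
  have hu : u = u.1 • ((1, 0) : ℤ × ℤ) + u.2 • (0, 1) := by ext <;> simp
  rw [hu, map_add, map_zsmul, map_zsmul, h₁, h₂]
  ext <;> simp [mul_comm]

theorem cross_linear {R : Type*} [CommRing R] (a b c d : R) (u v : R × R) :
    cross (a * u.1 + b * u.2, c * u.1 + d * u.2) (a * v.1 + b * v.2, c * v.1 + d * v.2) =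
      (a * d - b * c) * cross u v := by
  simp only [cross]
  ring

theorem cross_map_int_prod {F : Type*} [FunLike F (ℤ × ℤ) (ℤ × ℤ)]
    [AddMonoidHomClass F (ℤ × ℤ) (ℤ × ℤ)] (f : F) {a b c d : ℤ}
    (h₁ : f (1, 0) = (a, c)) (h₂ : f (0, 1) = (b, d)) (u v : ℤ × ℤ) :
    cross (f u) (f v) = (a * d - b * c) * cross u v := by
  rw [map_int_prod_eq f h₁ h₂, map_int_prod_eq f h₁ h₂, cross_linear]

theorem stmt_19_general (φ : ℤ × ℤ ≃+ ℤ × ℤ) (a b c d k₀ k₀' l₁ l₂ : ℤ)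
    (hφ₁ : φ (1, 0) = (a, c)) (hφ₂ : φ (0, 1) = (b, d))
    (hdet : a * d - b * c = 1)
    (hk₀ : 0 < k₀) (hk₀' : 0 < k₀')
    (hl₁ : 0 < l₁) (hl₁₂ : l₁ < l₂)
    (h1 : φ (k₀, 0) = (l₁, l₂))
    (h2 : φ (l₁, l₂) = (k₀', 0)) :
    False := by
  have hcross := cross_map_int_prod φ hφ₁ hφ₂ (k₀, 0) (l₁, l₂)
  rw [h1, h2, hdet] at hcross
  simp only [cross] at hcross
  have hsum : (k₀ + k₀') * l₂ = 0 := by linear_combination -hcross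
  have hpos : 0 < (k₀ + k₀') * l₂ := mul_pos (add_pos hk₀ hk₀') (hl₁.trans hl₁₂)
  exact hpos.ne' hsum

/-- The case `σ = (12)`, `ad - bc = 1` in the non-isomorphism argument of Proposition
5.6, Case 2(V): an automorphism `φ` of `ℤ²` with matrix `(a b; c d)`, `ad - bc = 1`,
sending `(k₀, 0)` to `(l₁, l₂)` and `(l₁, l₂)` to `(k₀', 0)`, where `k₀, k₀' > 0`,
`0 < l₁ < l₂`, `l₁ = l̄₁ l`, `l₂ = l̄₂ l` with `l > 0` and `gcd(l̄₁, l̄₂) = 1`, yields a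
contradiction (indeed `k₀' = -l < 0`). -/
theorem stmt_19 (φ : ℤ × ℤ ≃+ ℤ × ℤ) (a b c d k₀ k₀' l₁ l₂ l lb₁ lb₂ : ℤ)
    (hφ₁ : φ (1, 0) = (a, c)) (hφ₂ : φ (0, 1) = (b, d))
    (hdet : a * d - b * c = 1)
    (hk₀ : 0 < k₀) (hk₀' : 0 < k₀')
    (hl₁ : 0 < l₁) (hl₁₂ : l₁ < l₂)
    (hl : 0 < l) (hlb₁ : l₁ = lb₁ * l) (hlb₂ : l₂ = lb₂ * l)
    (hcop : IsCoprime lb₁ lb₂)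
    (h1 : φ (k₀, 0) = (l₁, l₂))
    (h2 : φ (l₁, l₂) = (k₀', 0)) :
    False :=
  stmt_19_general φ a b c d k₀ k₀' l₁ l₂ hφ₁ hφ₂ hdet hk₀ hk₀' hl₁ hl₁₂ h1 h2
end
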